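/- arXiv:2303.08963 — 3 statements merged into one kernel-verified Lean document; each statement's English description precedes it below -/
import Mathlib

section
/- Let A be a matrix in SL(2,ℂ) and let R be a real number with R ≥ 0 such that the complex absolute value of the trace of A is at most R. Then every eigenvalue λ of A satisfies |λ|² ≤ R² + 4; equivalently, 2·log|λ| ≤ log(R² + 4). -/
/-! The eigenvalues of `A ∈ SL(2,ℂ)` are the roots of `μ² - (tr A) μ + 1`, so
`|μ|² ≤ |tr A| |μ| + 1`; bounding `|tr A| |μ|` by `(|tr A|² + |μ|²) / 2` gives
`|μ|² ≤ |tr A|² + 2`. -/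

theorem Matrix.sq_sub_trace_mul_add_det_eq_zero_of_mem_spectrum {K : Type*} [Field K]
    {M : Matrix (Fin 2) (Fin 2) K} {μ : K} (hμ : μ ∈ spectrum K M) :
    μ ^ 2 - M.trace * μ + M.det = 0 := by
  simpa [Matrix.charpoly_fin_two] using (Matrix.mem_spectrum_iff_isRoot_charpoly.mp hμ).eq_zero

theorem norm_sq_le_of_sq_sub_mul_add_eq_zero {𝕜 : Type*} [NormedDivisionRing 𝕜] {t d μ : 𝕜}
    (h : μ ^ 2 - t * μ + d = 0) : ‖μ‖ ^ 2 ≤ ‖t‖ ^ 2 + 2 * ‖d‖ := by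
  have hμ : μ ^ 2 = t * μ - d := by
    rw [← sub_eq_zero, ← h]
    abel
  have hroot : ‖μ‖ ^ 2 ≤ ‖t‖ * ‖μ‖ + ‖d‖ :=
    calc ‖μ‖ ^ 2 = ‖t * μ - d‖ := by rw [← norm_pow, hμ]
      _ ≤ ‖t * μ‖ + ‖d‖ := norm_sub_le _ _
      _ = ‖t‖ * ‖μ‖ + ‖d‖ := by rw [norm_mul]
  nlinarith [sq_nonneg (‖t‖ - ‖μ‖)]

theorem eigenvalue_bound_of_trace_bound_general
    (A : Matrix.SpecialLinearGroup (Fin 2) ℂ) (R : ℝ)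
    (htr : ‖Matrix.trace (A : Matrix (Fin 2) (Fin 2) ℂ)‖ ≤ R)
    (lam : ℂ) (hlam : lam ∈ spectrum ℂ (A : Matrix (Fin 2) (Fin 2) ℂ)) :
    ‖lam‖ ^ 2 ≤ R ^ 2 + 4 ∧
      2 * Real.log ‖lam‖ ≤ Real.log (R ^ 2 + 4) := by
  have hdet : ‖(A : Matrix (Fin 2) (Fin 2) ℂ).det‖ = 1 := by rw [A.det_coe, norm_one]
  have hsq : ‖lam‖ ^ 2 ≤ R ^ 2 + 4 :=
    calc ‖lam‖ ^ 2 ≤ ‖(A : Matrix (Fin 2) (Fin 2) ℂ).trace‖ ^ 2 + 2 * 1 := hdet ▸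
          norm_sq_le_of_sq_sub_mul_add_eq_zero
            (Matrix.sq_sub_trace_mul_add_det_eq_zero_of_mem_spectrum hlam)
      _ ≤ R ^ 2 + 4 := by nlinarith [pow_le_pow_left₀ (norm_nonneg _) htr 2]
  have hlam0 : lam ≠ 0 := by
    rintro rfl
    exact spectrum.zero_notMem ℂ
      ((Matrix.isUnit_iff_isUnit_det _).mpr (by simp)) hlam
  refine ⟨hsq, ?_⟩
  calc 2 * Real.log ‖lam‖ = Real.log (‖lam‖ ^ 2) := by rw [Real.log_pow]; norm_num
    _ ≤ Real.log (R ^ 2 + 4) := Real.log_le_log (by positivity) hsq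

/-- Matrix form of Lakeland–Leininger: if `A ∈ SL(2,ℂ)` has trace of complex
absolute value at most `R ≥ 0`, then every eigenvalue `λ` of `A` satisfies
`|λ|² ≤ R² + 4`, equivalently `2·log |λ| ≤ log (R² + 4)`. -/
theorem eigenvalue_bound_of_trace_bound
    (A : Matrix.SpecialLinearGroup (Fin 2) ℂ) (R : ℝ) (hR : 0 ≤ R)
    (htr : ‖Matrix.trace (A : Matrix (Fin 2) (Fin 2) ℂ)‖ ≤ R)
    (lam : ℂ) (hlam : lam ∈ spectrum ℂ (A : Matrix (Fin 2) (Fin 2) ℂ)) :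
    ‖lam‖ ^ 2 ≤ R ^ 2 + 4 ∧
      2 * Real.log ‖lam‖ ≤ Real.log (R ^ 2 + 4) :=
  eigenvalue_bound_of_trace_bound_general A R htr lam hlam
end

section
/- Let V_c be a real number with V_c ≥ π²·√3, let n ≥ 1 be a natural number, and let x be a real number with 1 < x ≤ 4·V_c/√3. Then min( n²·x² + 4 , (n − 1/2)²·x + V_c²/x ) ≤ 2·n²·V_c^{4/3} + 4. -/
open Real

/-- Analytic core of Lemma 3.3: for `V_c ≥ π²√3`, `n ≥ 1` and `1 < x ≤ 4V_c/√3`,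
`min (n²x² + 4) ((n − 1/2)²x + V_c²/x) ≤ 2n²V_c^{4/3} + 4`. -/
theorem min_trace_sq_bound (Vc : ℝ) (hVc : Real.pi ^ 2 * Real.sqrt 3 ≤ Vc)
    (n : ℕ) (hn : 1 ≤ n) (x : ℝ) (hx1 : 1 < x) (hx2 : x ≤ 4 * Vc / Real.sqrt 3) :
    min ((n : ℝ) ^ 2 * x ^ 2 + 4) (((n : ℝ) - 1/2) ^ 2 * x + Vc ^ 2 / x) ≤
      2 * (n : ℝ) ^ 2 * Vc ^ ((4 : ℝ)/3) + 4 := by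
  have h3 : (0:ℝ) < Real.sqrt 3 := Real.sqrt_pos.2 (by norm_num)
  have h3' : (1.7:ℝ) ≤ Real.sqrt 3 := by
    rw [show (1.7:ℝ) = Real.sqrt (1.7^2) from (Real.sqrt_sq (by norm_num)).symm]
    exact Real.sqrt_le_sqrt (by norm_num)
  have hs : Real.sqrt 3 ^ 2 = 3 := Real.sq_sqrt (by norm_num)
  have hpi : (3:ℝ) ≤ Real.pi := by linarith [Real.pi_gt_three]
  have hVc' : (13:ℝ) ≤ Vc := by nlinarith
  have hVpos : (0:ℝ) < Vc := by linarith
  have hn1 : (1:ℝ) ≤ (n:ℝ) := by exact_mod_cast hn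
  have hn2 : (1:ℝ) ≤ (n:ℝ)^2 := by nlinarith
  have hVr : (0:ℝ) < Vc ^ ((4:ℝ)/3) := Real.rpow_pos_of_pos hVpos _
  by_cases hc : x ≤ Vc ^ ((2:ℝ)/3)
  · refine le_trans (min_le_left _ _) ?_
    have hkey : Vc ^ ((2:ℝ)/3) * Vc ^ ((2:ℝ)/3) = Vc ^ ((4:ℝ)/3) := by
      rw [← Real.rpow_add hVpos]; norm_num
    have hx2sq : x ^ 2 ≤ Vc ^ ((4:ℝ)/3) := by
      have h0x : (0:ℝ) ≤ x := by linarith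
      nlinarith [mul_le_mul hc hc h0x (Real.rpow_nonneg hVpos.le ((2:ℝ)/3))]
    nlinarith
  · push_neg at hc
    refine le_trans (min_le_right _ _) ?_
    have hxpos : (0:ℝ) < x := by linarith
    have h1 : Vc ^ 2 / x ≤ Vc ^ ((4:ℝ)/3) := by
      rw [div_le_iff₀ hxpos]
      have hsum : Vc ^ ((4:ℝ)/3) * Vc ^ ((2:ℝ)/3) = Vc ^ 2 := by
        rw [← Real.rpow_add hVpos, ← Real.rpow_natCast Vc 2]; norm_num
      nlinarith
    have h2 : x ≤ Vc ^ ((4:ℝ)/3) := by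
      have hcube : (4 / Real.sqrt 3) ^ (3:ℕ) ≤ Vc := by
        rw [div_pow, div_le_iff₀ (by positivity)]
        have hcub : Real.sqrt 3 ^ 3 = 3 * Real.sqrt 3 := by
          rw [pow_succ, hs]
        rw [hcub]
        nlinarith
      have hroot : 4 / Real.sqrt 3 ≤ Vc ^ ((1:ℝ)/3) := by
        calc 4 / Real.sqrt 3 = ((4 / Real.sqrt 3) ^ (3:ℕ)) ^ ((1:ℝ)/3) := by
              rw [← Real.rpow_natCast (4 / Real.sqrt 3) 3,
                ← Real.rpow_mul (by positivity)]
              norm_num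
          _ ≤ Vc ^ ((1:ℝ)/3) := Real.rpow_le_rpow (by positivity) hcube (by norm_num)
      calc x ≤ 4 * Vc / Real.sqrt 3 := hx2
        _ = (4 / Real.sqrt 3) * Vc := by ring
        _ ≤ Vc ^ ((1:ℝ)/3) * Vc := by nlinarith
        _ = Vc ^ ((1:ℝ)/3 + 1) := (Real.rpow_add_one hVpos.ne' _).symm
        _ = Vc ^ ((4:ℝ)/3) := by norm_num
    nlinarith
end

section
/- Let V_c be a real number with V_c ≥ π²·√3, let n ≥ 1 be a natural number, and let l be a real number with 2π < l ≤ √(4·V_c/√3). Then min( √(n²·l⁴ + 4) , √((n − 1/2)²·l² + V_c²/l²) ) ≤ √(2·n²·V_c^{4/3} + 4). -/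
open Real

private lemma aux_fourth (a b : ℝ) (ha : 0 < a) (hb : 0 < b)
    (h : 2 * b ^ 4 < a ^ 4) : 1.41 * b ^ 2 ≤ a ^ 2 := by
  by_contra hc
  push_neg at hc
  nlinarith [sq_nonneg a, sq_nonneg b, mul_pos ha ha, mul_pos hb hb]

set_option maxHeartbeats 1000000 in
/-- Numeric content of Lemma 3.3: for `V_c ≥ π²√3`, `n ≥ 1` and
`2π < l ≤ √(4V_c/√3)`,
`min √(n²l⁴ + 4) √((n − 1/2)²l² + V_c²/l²) ≤ √(2n²V_c^{4/3} + 4)`. -/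
theorem min_trace_bound (Vc : ℝ) (hVc : Real.pi ^ 2 * Real.sqrt 3 ≤ Vc)
    (n : ℕ) (hn : 1 ≤ n) (l : ℝ) (hl1 : 2 * Real.pi < l)
    (hl2 : l ≤ Real.sqrt (4 * Vc / Real.sqrt 3)) :
    min (Real.sqrt ((n : ℝ) ^ 2 * l ^ 4 + 4))
        (Real.sqrt (((n : ℝ) - 1/2) ^ 2 * l ^ 2 + Vc ^ 2 / l ^ 2)) ≤
      Real.sqrt (2 * (n : ℝ) ^ 2 * Vc ^ ((4 : ℝ)/3) + 4) := by
  have hpi : (3.1415 : ℝ) < Real.pi := by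
    have := Real.pi_gt_d6; linarith
  have hl0 : 0 < l := lt_trans (by nlinarith) hl1
  have hsq3 := Real.sq_sqrt (show (0:ℝ) ≤ 3 by norm_num)
  have hsq3n := Real.sqrt_nonneg 3
  have h3a : (1.732 : ℝ) ≤ Real.sqrt 3 := by nlinarith [sq_nonneg (Real.sqrt 3 - 1.732)]
  have h3b : Real.sqrt 3 ≤ 1.7321 := by nlinarith [sq_nonneg (Real.sqrt 3 - 1.7321)]
  have hVc17 : (17 : ℝ) ≤ Vc := by nlinarith
  have hVc0 : (0:ℝ) < Vc := by linarith
  set t : ℝ := Vc ^ ((1:ℝ)/3) with htdef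
  have ht0 : 0 < t := Real.rpow_pos_of_pos hVc0 _
  have ht3 : t ^ 3 = Vc := by
    rw [htdef, ← Real.rpow_natCast (Vc ^ ((1:ℝ)/3)) 3, ← Real.rpow_mul hVc0.le]
    norm_num
  have ht4 : Vc ^ ((4:ℝ)/3) = t ^ 4 := by
    rw [htdef, ← Real.rpow_natCast (Vc ^ ((1:ℝ)/3)) 4, ← Real.rpow_mul hVc0.le]
    norm_num
  have ht52 : (5/2 : ℝ) ≤ t := by
    nlinarith [sq_nonneg (t - 5/2), sq_nonneg t, sq_nonneg (t + 5/2)]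
  have hn1 : (1:ℝ) ≤ (n:ℝ) := by exact_mod_cast hn
  have hn2 : (1:ℝ) ≤ (n:ℝ)^2 := by nlinarith
  have hl2sq : l ^ 2 ≤ 4 * Vc / Real.sqrt 3 := by
    have hs := Real.sq_sqrt (show (0:ℝ) ≤ 4 * Vc / Real.sqrt 3 by positivity)
    nlinarith [Real.sqrt_nonneg (4 * Vc / Real.sqrt 3)]
  have hl2t : l ^ 2 ≤ 2.31 * t ^ 3 := by
    rw [ht3]
    have : 4 * Vc / Real.sqrt 3 ≤ 2.31 * Vc := by
      rw [div_le_iff₀ (by nlinarith)]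
      nlinarith
    linarith
  by_cases hcase : l ^ 4 ≤ 2 * t ^ 4
  · refine le_trans (min_le_left _ _) (Real.sqrt_le_sqrt ?_)
    rw [ht4]
    have := mul_le_mul_of_nonneg_left hcase (sq_nonneg (n:ℝ))
    linarith
  · push_neg at hcase
    refine le_trans (min_le_right _ _) (Real.sqrt_le_sqrt ?_)
    rw [ht4]
    have hl2big : 1.41 * t ^ 2 ≤ l ^ 2 := aux_fourth l t hl0 ht0 hcase
    have hX : Vc ^ 2 / l ^ 2 ≤ 3/4 * t ^ 4 := by
      rw [div_le_iff₀ (by positivity), ← ht3]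
      have h1 := mul_le_mul_of_nonneg_left hl2big (show (0:ℝ) ≤ 3/4 * t^4 by positivity)
      linarith [pow_pos ht0 6]
    have h35 : t ^ 3 ≤ 2/5 * t ^ 4 := by nlinarith [pow_pos ht0 3]
    have hB : ((n:ℝ) - 1/2)^2 * l^2 ≤ (n:ℝ)^2 * (2.31 * (2/5) * t^4) := by
      calc ((n:ℝ) - 1/2)^2 * l^2 ≤ (n:ℝ)^2 * l^2 := by nlinarith [sq_nonneg l]
        _ ≤ (n:ℝ)^2 * (2.31 * t^3) := by nlinarith [sq_nonneg (n:ℝ)]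
        _ ≤ (n:ℝ)^2 * (2.31 * (2/5) * t^4) := by nlinarith [sq_nonneg (n:ℝ)]
    have hslack : (0:ℝ) ≤ ((n:ℝ)^2 - 1) * t^4 :=
      mul_nonneg (by linarith) (by positivity)
    linarith [pow_pos ht0 4]
end
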